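/- arXiv:2504.01280 — 2 statements merged into one kernel-verified Lean document; each statement's English description precedes it below -/
import Mathlib

section
/- In the 4×4 marriage market of Example 2, the matching μ_1 matching m1–w2, m2–w1, m3–w3, m4–w4 has exactly one blocking pair, namely (m2,w2), which is mutually optimal; satisfying it yields the matching μ_2 matching m2–w2, m3–w3, m4–w4 with m1 and w1 unmatched; and there exists a sequence of matchings μ_2, μ_3, …, μ_9, μ_10 with μ_10 = μ_2 and μ_2, …, μ_9 pairwise distinct such that for every i ∈ {2,…,9}, the matching μ_i is unstable, admits a unique mutually optimal blocking pair, and μ_{i+1} is obtained from μ_i by satisfying that unique mutually optimal blocking pair. Hence the deterministic process of satisfying the unique mutually optimal blocking pair at every step cycles forever and never reaches a stable matching. -/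
/-!
Everything about the fixed market is a finite check. The cycle satisfies, in turn, the pairs
(m1,w3), (m4,w1), (m3,w2), (m1,w4), (m2,w1), (m3,w3), (m4,w4), (m2,w2): at each of μ₂, …, μ₉
the listed pair is the only mutually optimal blocking pair, and satisfying it gives the next
matching. At μ₁ mutual optimality of (m2,w2) is automatic, since it is the only blocking pair.
-/

namespace Marriage

/-- A marriage market: disjoint sets of men `M` and women `W`, each man `m` with a strict
(linear) preference order on `W ∪ {m}` (encoded as `Option W`, where `none` stands for
staying single, i.e. being matched to himself), and likewise for women. -/
structure Market (M W : Type*) where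
  prefM : M → Option W → Option W → Prop
  prefW : W → Option M → Option M → Prop
  prefM_sto : ∀ m, IsStrictTotalOrder (Option W) (prefM m)
  prefW_sto : ∀ w, IsStrictTotalOrder (Option M) (prefW w)

/-- A matching: `f m = some w` iff `m` is matched to `w` iff `g w = some m`;
`f m = none` (resp. `g w = none`) means the player is unmatched (matched to themself). -/
structure Matching (M W : Type*) where
  f : M → Option W
  g : W → Option M
  consistent : ∀ m w, f m = some w ↔ g w = some m

variable {M W : Type*}

/-- `(m, w)` is a blocking pair of `μ`. -/
def IsBlocking (E : Market M W) (μ : Matching M W) (m : M) (w : W) : Prop :=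
  μ.f m ≠ some w ∧ E.prefM m (some w) (μ.f m) ∧ E.prefW w (some m) (μ.g w)

/-- `μ` is individually rational: no player strictly prefers being single to their match. -/
def IndivRational (E : Market M W) (μ : Matching M W) : Prop :=
  (∀ m, ¬ E.prefM m none (μ.f m)) ∧ (∀ w, ¬ E.prefW w none (μ.g w))

/-- `μ` is stable: individually rational and without blocking pairs. -/
def IsStable (E : Market M W) (μ : Matching M W) : Prop :=
  IndivRational E μ ∧ ∀ m w, ¬ IsBlocking E μ m w

/-- `μ'` is obtained from `μ` by satisfying the pair `(m, w)`: `m` and `w` get matched to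
each other, their former partners (if any) become unmatched, everyone else keeps their
partner. -/
def Satisfies (μ μ' : Matching M W) (m : M) (w : W) : Prop :=
  μ'.f m = some w ∧ μ'.g w = some m ∧
  (∀ m', m' ≠ m → μ.f m' = some w → μ'.f m' = none) ∧
  (∀ m', m' ≠ m → μ.f m' ≠ some w → μ'.f m' = μ.f m') ∧
  (∀ w', w' ≠ w → μ.g w' = some m → μ'.g w' = none) ∧
  (∀ w', w' ≠ w → μ.g w' ≠ some m → μ'.g w' = μ.g w')

/-- A blocking pair `(m, w)` of `μ` that is optimal for the man `m`. -/
def OptimalForM (E : Market M W) (μ : Matching M W) (m : M) (w : W) : Prop :=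
  IsBlocking E μ m w ∧
  ∀ w', IsBlocking E μ m w' → w' ≠ w → E.prefM m (some w) (some w')

/-- A blocking pair `(m, w)` of `μ` that is optimal for the woman `w`. -/
def OptimalForW (E : Market M W) (μ : Matching M W) (m : M) (w : W) : Prop :=
  IsBlocking E μ m w ∧
  ∀ m', IsBlocking E μ m' w → m' ≠ m → E.prefW w (some m) (some m')

/-- A mutually optimal blocking pair of `μ`. -/
def MutuallyOptimal (E : Market M W) (μ : Matching M W) (m : M) (w : W) : Prop :=
  OptimalForM E μ m w ∧ OptimalForW E μ m w


/-- Rank (lower = better) on `Option (Fin n)` induced by a rank matrix, with being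
unmatched (`none`) strictly worse than any partner. -/
def optRank {n : ℕ} (r : Fin n → Fin n → ℕ) (i : Fin n) : Option (Fin n) → ℕ
  | none => n
  | some j => r i j

/-- Build a market on `Fin n × Fin n` from rank matrices (lower rank = more preferred). -/
def mkMarket {n : ℕ} (rM rW : Fin n → Fin n → ℕ)
    (hM : ∀ (i : Fin n) (a b : Option (Fin n)),
      optRank rM i a < optRank rM i b ∨ a = b ∨ optRank rM i b < optRank rM i a)
    (hW : ∀ (i : Fin n) (a b : Option (Fin n)),
      optRank rW i a < optRank rW i b ∨ a = b ∨ optRank rW i b < optRank rW i a) :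
    Market (Fin n) (Fin n) where
  prefM m a b := optRank rM m a < optRank rM m b
  prefW w a b := optRank rW w a < optRank rW w b
  prefM_sto m :=
    { trichotomous := fun a b h1 h2 => ((hM m a b).resolve_left h1).resolve_right h2
      irrefl := fun _ => lt_irrefl _
      trans := fun _ _ _ h1 h2 => lt_trans h1 h2 }
  prefW_sto w :=
    { trichotomous := fun a b h1 h2 => ((hW w a b).resolve_left h1).resolve_right h2
      irrefl := fun _ => lt_irrefl _
      trans := fun _ _ _ h1 h2 => lt_trans h1 h2 }

/-- Rank matrix for the men of Example 2. -/
def Ex2M : Fin 4 → Fin 4 → ℕ := ![![3,0,2,1], ![2,1,3,0], ![0,2,1,3], ![1,3,0,2]]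

/-- Rank matrix for the women of Example 2. -/
def Ex2W : Fin 4 → Fin 4 → ℕ := ![![0,1,3,2], ![3,2,1,0], ![1,0,2,3], ![2,3,0,1]]

/-- The 4×4 marriage market of Example 2. -/
def Ex2 : Market (Fin 4) (Fin 4) := mkMarket Ex2M Ex2W (by decide) (by decide)

/-- The matching μ₁ of Example 2: m1–w2, m2–w1, m3–w3, m4–w4. -/
def Ex2mu1 : Matching (Fin 4) (Fin 4) :=
  ⟨![some 1, some 0, some 2, some 3], ![some 1, some 0, some 2, some 3], by decide⟩

/-- The matching μ₂ of Example 2: m2–w2, m3–w3, m4–w4, with m1 and w1 unmatched. -/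
def Ex2mu2 : Matching (Fin 4) (Fin 4) :=
  ⟨![none, some 1, some 2, some 3], ![none, some 1, some 2, some 3], by decide⟩

theorem IsBlocking.not_isStable {E : Market M W} {μ : Matching M W} {m : M} {w : W}
    (h : IsBlocking E μ m w) : ¬ IsStable E μ :=
  fun hs => hs.2 m w h

theorem MutuallyOptimal.isBlocking {E : Market M W} {μ : Matching M W} {m : M} {w : W}
    (h : MutuallyOptimal E μ m w) : IsBlocking E μ m w :=
  h.1.1

theorem mutuallyOptimal_of_forall_isBlocking_iff {E : Market M W} {μ : Matching M W}
    {m : M} {w : W} (h : ∀ m' w', IsBlocking E μ m' w' ↔ m' = m ∧ w' = w) :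
    MutuallyOptimal E μ m w := by
  have hb : IsBlocking E μ m w := (h m w).2 ⟨rfl, rfl⟩
  refine ⟨⟨hb, fun w' hw' hne => ?_⟩, ⟨hb, fun m' hm' hne => ?_⟩⟩
  · exact absurd ((h m w').1 hw').2 hne
  · exact absurd ((h m' w).1 hm').1 hne

theorem not_isStable_and_existsUnique_mutuallyOptimal {E : Market M W}
    {μ μ' : Matching M W} {p : M × W}
    (hp : ∀ m w, MutuallyOptimal E μ m w ↔ (m, w) = p) (hs : Satisfies μ μ' p.1 p.2) :
    ¬ IsStable E μ ∧ (∃! q : M × W, MutuallyOptimal E μ q.1 q.2) ∧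
      ∀ m w, MutuallyOptimal E μ m w → Satisfies μ μ' m w := by
  have hmo : MutuallyOptimal E μ p.1 p.2 := (hp p.1 p.2).2 rfl
  refine ⟨hmo.isBlocking.not_isStable, ⟨p, hmo, fun q hq => (hp q.1 q.2).1 hq⟩, ?_⟩
  intro m w h
  obtain rfl := (hp m w).1 h
  exact hs

section Decidable

variable [Fintype M] [Fintype W] [DecidableEq M] [DecidableEq W]

instance (μ μ' : Matching M W) (m : M) (w : W) : Decidable (Satisfies μ μ' m w) :=
  inferInstanceAs (Decidable (_ ∧ _ ∧ (∀ _, _) ∧ (∀ _, _) ∧ (∀ _, _) ∧ ∀ _, _))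

variable (E : Market M W) [∀ m, DecidableRel (E.prefM m)] [∀ w, DecidableRel (E.prefW w)]

instance (μ : Matching M W) (m : M) (w : W) : Decidable (IsBlocking E μ m w) :=
  inferInstanceAs (Decidable (_ ∧ _ ∧ _))

instance (μ : Matching M W) (m : M) (w : W) : Decidable (MutuallyOptimal E μ m w) :=
  inferInstanceAs (Decidable ((_ ∧ ∀ _, _) ∧ (_ ∧ ∀ _, _)))

end Decidable

instance (m : Fin 4) : DecidableRel (Ex2.prefM m) :=
  fun _ _ => inferInstanceAs (Decidable (_ < _))

instance (w : Fin 4) : DecidableRel (Ex2.prefW w) :=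
  fun _ _ => inferInstanceAs (Decidable (_ < _))

def Ex2mu3 : Matching (Fin 4) (Fin 4) :=
  ⟨![some 2, some 1, none, some 3], ![none, some 1, some 0, some 3], by decide⟩

def Ex2mu4 : Matching (Fin 4) (Fin 4) :=
  ⟨![some 2, some 1, none, some 0], ![some 3, some 1, some 0, none], by decide⟩

def Ex2mu5 : Matching (Fin 4) (Fin 4) :=
  ⟨![some 2, none, some 1, some 0], ![some 3, some 2, some 0, none], by decide⟩

def Ex2mu6 : Matching (Fin 4) (Fin 4) :=
  ⟨![some 3, none, some 1, some 0], ![some 3, some 2, none, some 0], by decide⟩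

def Ex2mu7 : Matching (Fin 4) (Fin 4) :=
  ⟨![some 3, some 0, some 1, none], ![some 1, some 2, none, some 0], by decide⟩

def Ex2mu8 : Matching (Fin 4) (Fin 4) :=
  ⟨![some 3, some 0, some 2, none], ![some 1, none, some 2, some 0], by decide⟩

def Ex2mu9 : Matching (Fin 4) (Fin 4) :=
  ⟨![none, some 0, some 2, some 3], ![some 1, none, some 2, some 3], by decide⟩

/-- `Ex2cycle i` is the paper's `μ_{i+2}`. -/
def Ex2cycle : Fin 9 → Matching (Fin 4) (Fin 4) :=
  ![Ex2mu2, Ex2mu3, Ex2mu4, Ex2mu5, Ex2mu6, Ex2mu7, Ex2mu8, Ex2mu9, Ex2mu2]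

def Ex2cyclePair : Fin 8 → Fin 4 × Fin 4 :=
  ![(0, 2), (3, 0), (2, 1), (0, 3), (1, 0), (2, 2), (3, 3), (1, 1)]

theorem ex2_isBlocking_mu1_iff (m w : Fin 4) : IsBlocking Ex2 Ex2mu1 m w ↔ m = 1 ∧ w = 1 := by
  revert m w
  decide

theorem ex2_satisfies_mu1_mu2 : Satisfies Ex2mu1 Ex2mu2 1 1 := by
  decide

theorem ex2_mutuallyOptimal_cycle_iff (i : Fin 8) (m w : Fin 4) :
    MutuallyOptimal Ex2 (Ex2cycle i.castSucc) m w ↔ (m, w) = Ex2cyclePair i := by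
  revert i m w
  decide

theorem ex2_satisfies_cycle (i : Fin 8) :
    Satisfies (Ex2cycle i.castSucc) (Ex2cycle i.succ) (Ex2cyclePair i).1 (Ex2cyclePair i).2 := by
  revert i
  decide

theorem ex2_cycle_castSucc_injective :
    Function.Injective (fun i : Fin 8 => Ex2cycle i.castSucc) := by
  have hf : Function.Injective (fun i : Fin 8 => (Ex2cycle i.castSucc).f) := by decide
  exact fun i j h => hf (congrArg Matching.f h)

/-- In the 4×4 market of Example 2: `μ₁` (m1–w2, m2–w1, m3–w3, m4–w4) has exactly one
blocking pair, namely (m2, w2), which is mutually optimal; satisfying it yields `μ₂`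
(m2–w2, m3–w3, m4–w4, with m1 and w1 unmatched); and there is a cycle
μ₂, μ₃, …, μ₉, μ₁₀ = μ₂ of pairwise distinct matchings μ₂, …, μ₉ in which every matching
is unstable, admits a unique mutually optimal blocking pair, and the next matching is
obtained by satisfying that unique mutually optimal blocking pair. -/
theorem example2_cycle_of_unique_mutually_optimal_blocking_pairs :
    (∀ m w, IsBlocking Ex2 Ex2mu1 m w ↔ (m = 1 ∧ w = 1)) ∧
    MutuallyOptimal Ex2 Ex2mu1 1 1 ∧
    Satisfies Ex2mu1 Ex2mu2 1 1 ∧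
    ∃ seq : Fin 9 → Matching (Fin 4) (Fin 4),
      seq 0 = Ex2mu2 ∧ seq (Fin.last 8) = Ex2mu2 ∧
      Function.Injective (fun i : Fin 8 => seq i.castSucc) ∧
      ∀ i : Fin 8,
        ¬ IsStable Ex2 (seq i.castSucc) ∧
        (∃! p : Fin 4 × Fin 4, MutuallyOptimal Ex2 (seq i.castSucc) p.1 p.2) ∧
        (∀ m w, MutuallyOptimal Ex2 (seq i.castSucc) m w →
          Satisfies (seq i.castSucc) (seq i.succ) m w) := by
  refine ⟨ex2_isBlocking_mu1_iff, mutuallyOptimal_of_forall_isBlocking_iff ex2_isBlocking_mu1_iff,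
    ex2_satisfies_mu1_mu2, Ex2cycle, rfl, rfl, ex2_cycle_castSucc_injective, fun i =>
      not_isStable_and_existsUnique_mutuallyOptimal (ex2_mutuallyOptimal_cycle_iff i)
        (ex2_satisfies_cycle i)⟩

end Marriage
end

section
/- For every finite marriage market, every sequence of matchings μ_1, μ_2, …, μ_k in which each μ_{i+1} is obtained from μ_i by satisfying a blocking pair (m_i,w_i) of μ_i with w_i matched in μ_i (that is, μ_i(w_i) ≠ w_i) has at most |W|·|M| steps, i.e., k ≤ |W|·|M| + 1. In particular, there is no infinite such sequence. -/
namespace Marriage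

variable {M W : Type*}

/-! The potential of a matching counts, for every woman, the men she ranks below her partner,
all men if she is single; it is at most `|W|·|M|`. Satisfying a blocking pair `(m, w)` with `w`
matched raises it strictly: `w` trades her partner for a man she prefers, and every other woman
keeps her partner or is left single, which maximises her count. -/

theorem _root_.Fin.le_of_strictMono_of_forall_le {k B : ℕ} {f : Fin (k + 1) → ℕ}
    (hf : StrictMono f) (hB : ∀ i, f i ≤ B) : k ≤ B := by
  simpa using Fintype.card_le_of_injective
    (fun i => (⟨f i, Nat.lt_succ_of_le (hB i)⟩ : Fin (B + 1)))
    fun i j hij => hf.injective (Fin.mk.inj hij)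

open scoped Classical in
noncomputable def menBelowPartner [Fintype M] (E : Market M W) (μ : Matching M W) (w : W) :
    Finset M :=
  Finset.univ.filter fun m' => ∀ m₀ ∈ μ.g w, E.prefW w (some m₀) (some m')

noncomputable def potential [Fintype M] [Fintype W] (E : Market M W) (μ : Matching M W) : ℕ :=
  ∑ w, (menBelowPartner E μ w).card

theorem Satisfies.g_eq_or_eq_none {w' : W} (hs : Satisfies μ μ' m w) (hw : w' ≠ w) :
    μ'.g w' = μ.g w' ∨ μ'.g w' = none := by
  by_cases h : μ.g w' = some m
  · exact .inr (hs.2.2.2.2.1 w' hw h)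
  · exact .inl (hs.2.2.2.2.2 w' hw h)

section
variable [Fintype M] {E : Market M W} {μ μ' : Matching M W} {m : M} {w : W}

theorem menBelowPartner_of_g_eq_none (h : μ.g w = none) :
    menBelowPartner E μ w = Finset.univ := by
  simp [menBelowPartner, h]

theorem menBelowPartner_ssubset {m₀ : M} (h₀ : μ.g w = some m₀) (h : μ'.g w = some m)
    (hpref : E.prefW w (some m) (some m₀)) :
    menBelowPartner E μ w ⊂ menBelowPartner E μ' w := by
  have := E.prefW_sto w
  have hsub : menBelowPartner E μ w ⊆ menBelowPartner E μ' w := by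
    intro x hx
    simp only [menBelowPartner, h₀, h, Finset.mem_filter, Finset.mem_univ, Option.mem_def,
      Option.some.injEq, forall_eq', true_and] at hx ⊢
    exact _root_.trans hpref hx
  refine (Finset.ssubset_iff_of_subset hsub).2 ⟨m₀, ?_, ?_⟩ <;>
    simp [menBelowPartner, h₀, h, hpref, irrefl_of (E.prefW w)]

theorem Satisfies.menBelowPartner_subset {w' : W} (hs : Satisfies μ μ' m w) (hw : w' ≠ w) :
    menBelowPartner E μ w' ⊆ menBelowPartner E μ' w' := by
  rcases hs.g_eq_or_eq_none hw with h | h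
  · rw [menBelowPartner, menBelowPartner, h]
  · simp [menBelowPartner_of_g_eq_none h]

variable [Fintype W]

theorem potential_le (E : Market M W) (μ : Matching M W) :
    potential E μ ≤ Fintype.card W * Fintype.card M := by
  simpa [potential] using Finset.sum_le_sum fun w (_ : w ∈ Finset.univ) =>
    Finset.card_le_univ (menBelowPartner E μ w)

theorem potential_lt_of_satisfies (hb : IsBlocking E μ m w) (hw : μ.g w ≠ none)
    (hs : Satisfies μ μ' m w) : potential E μ < potential E μ' := by
  obtain ⟨m₀, h₀⟩ := Option.ne_none_iff_exists'.mp hw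
  have hlt : (menBelowPartner E μ w).card < (menBelowPartner E μ' w).card :=
    Finset.card_lt_card (menBelowPartner_ssubset h₀ hs.2.1 (h₀ ▸ hb.2.2))
  refine Finset.sum_lt_sum (fun w' _ => ?_) ⟨w, Finset.mem_univ w, hlt⟩
  rcases eq_or_ne w' w with rfl | hw'
  · exact hlt.le
  · exact Finset.card_le_card (hs.menBelowPartner_subset hw')

end

theorem bounded_sequences_of_blocking_pairs_with_matched_women_general
    {M W : Type} [Fintype M] [Fintype W]
    (E : Market M W) :
    (∀ (k : ℕ) (seq : Fin (k + 1) → Matching M W),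
      (∀ i : Fin k, ∃ m w,
        IsBlocking E (seq i.castSucc) m w ∧ (seq i.castSucc).g w ≠ none ∧
        Satisfies (seq i.castSucc) (seq i.succ) m w) →
      k ≤ Fintype.card W * Fintype.card M) ∧
    ¬ ∃ seq : ℕ → Matching M W,
        ∀ n : ℕ, ∃ m w,
          IsBlocking E (seq n) m w ∧ (seq n).g w ≠ none ∧
          Satisfies (seq n) (seq (n + 1)) m w := by
  refine ⟨fun k seq hseq => Fin.le_of_strictMono_of_forall_le (f := potential E ∘ seq)
      (Fin.strictMono_iff_lt_succ.2 fun i =>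
        let ⟨_, _, hb, hw, hs⟩ := hseq i
        potential_lt_of_satisfies hb hw hs)
      fun i => potential_le E (seq i), ?_⟩
  rintro ⟨seq, hseq⟩
  have hmono : StrictMono (potential E ∘ seq) := strictMono_nat_of_lt_succ fun n =>
    let ⟨_, _, hb, hw, hs⟩ := hseq n
    potential_lt_of_satisfies hb hw hs
  have := hmono.id_le (Fintype.card W * Fintype.card M + 1)
  exact this.not_gt (Nat.lt_succ_of_le (potential_le E _))

/-- Every sequence of matchings in which each step satisfies a blocking pair whose woman
member is matched has at most `|W|·|M|` steps (i.e. at most `|W|·|M| + 1` matchings), and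
in particular there is no infinite such sequence. -/
theorem bounded_sequences_of_blocking_pairs_with_matched_women
    {M W : Type} [Fintype M] [Fintype W] [Nonempty M] [Nonempty W]
    (E : Market M W) :
    (∀ (k : ℕ) (seq : Fin (k + 1) → Matching M W),
      (∀ i : Fin k, ∃ m w,
        IsBlocking E (seq i.castSucc) m w ∧ (seq i.castSucc).g w ≠ none ∧
        Satisfies (seq i.castSucc) (seq i.succ) m w) →
      k ≤ Fintype.card W * Fintype.card M) ∧
    ¬ ∃ seq : ℕ → Matching M W,
        ∀ n : ℕ, ∃ m w,
          IsBlocking E (seq n) m w ∧ (seq n).g w ≠ none ∧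
          Satisfies (seq n) (seq (n + 1)) m w :=
  bounded_sequences_of_blocking_pairs_with_matched_women_general E

end Marriage
end
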